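/- arXiv:1001.3534 — 5 statements merged into one kernel-verified Lean document; each statement's English description precedes it below -/
import Mathlib

section
/- Let G be a graph with a sign labeling L, and let v, w be vertices. Then the graph distance d(v,w) is at least |S(L(v),L(w))| + (1/2)|L^0(v) Δ L^0(w)|, where Δ denotes symmetric difference of the zero-supports. -/
open Finset

variable {E : Type*} [Fintype E] [DecidableEq E]

/-- The set of coordinates where the sign vector is `+`. -/
def plusSupp (X : E → SignType) : Finset E := univ.filter fun e => X e = 1

/-- The set of coordinates where the sign vector is `-`. -/
def minusSupp (X : E → SignType) : Finset E := univ.filter fun e => X e = -1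

/-- The zero-support of a sign vector. -/
def zeroSupp (X : E → SignType) : Finset E := univ.filter fun e => X e = 0

/-- The support of a sign vector. -/
def suppOf (X : E → SignType) : Finset E := univ.filter fun e => X e ≠ 0

/-- The separator of two sign vectors. -/
def sep (X Y : E → SignType) : Finset E :=
  univ.filter fun e => (X e = 1 ∧ Y e = -1) ∨ (X e = -1 ∧ Y e = 1)

/-- Adjacency of cocircuits: zero-supports differ in exactly two elements and separator empty. -/
def OMAdj (X Y : E → SignType) : Prop :=
  (symmDiff (zeroSupp X) (zeroSupp Y)).card = 2 ∧ sep X Y = ∅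

/-- `C` is the cocircuit set of a uniform oriented matroid of rank `r` on `n` elements. -/
def IsUOM (n r : ℕ) (C : Finset (E → SignType)) : Prop :=
  Fintype.card E = n ∧
  (∀ X ∈ C, (suppOf X).card = n - r + 1) ∧
  (∀ I : Finset E, I.card = n - r + 1 →
    ∃ X ∈ C, suppOf X = I ∧ -X ∈ C ∧ X ≠ -X ∧
      ∀ Y ∈ C, suppOf Y = I → Y = X ∨ Y = -X) ∧
  (∀ X ∈ C, ∀ Y ∈ C, X ≠ -Y → ∀ e ∈ sep X Y, ∃ Z ∈ C, Z e = 0 ∧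
    ∀ f, f ≠ e → Z f = X f ∨ Z f = Y f ∨ Z f = 0)

/-- The cocircuit graph of a set of cocircuits. -/
def cocircuitGraph (C : Finset (E → SignType)) :
    SimpleGraph {X : E → SignType // X ∈ C} where
  Adj X Y := OMAdj X.1 Y.1
  symm := by
    constructor
    intro X Y h
    obtain ⟨h1, h2⟩ := h
    refine ⟨by rwa [symmDiff_comm], ?_⟩
    rw [← h2]; unfold sep; ext e; simp; tauto
  loopless := by
    constructor
    intro X h
    simp [OMAdj, symmDiff_self] at h

/-- A sign labeling of a graph `G` with parameters `r`, `n`. -/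
def IsSignLabeling {V : Type*} (G : SimpleGraph V) (n r : ℕ)
    (L : V → E → SignType) : Prop :=
  Fintype.card E = n ∧ Function.Injective L ∧
  (∀ v, (suppOf (L v)).card = n - r + 1) ∧
  (∀ I : Finset E, I.card = n - r + 1 →
    ∃ v, suppOf (L v) = I ∧ (∃ w, L w = -L v) ∧ L v ≠ -L v ∧
      ∀ u, suppOf (L u) = I → L u = L v ∨ L u = -L v) ∧
  (∀ v w, G.Adj v w ↔ OMAdj (L v) (L w))

/-- A sign labeling is an OM-labeling if its image also satisfies elimination (C3). -/
def IsOMLabeling {V : Type*} (G : SimpleGraph V) (n r : ℕ)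
    (L : V → E → SignType) : Prop :=
  IsSignLabeling G n r L ∧
  ∀ v w : V, L v ≠ -L w → ∀ e ∈ sep (L v) (L w), ∃ u : V, L u e = 0 ∧
    ∀ f, f ≠ e → L u f = L v f ∨ L u f = L w f ∨ L u f = 0

/-- A walk is `(X,Y)`-crabbed w.r.t. a labeling `L` if every vertex on it has
positive part inside `X⁺ ∪ Y⁺` and negative part inside `X⁻ ∪ Y⁻`. -/
def Crabbed {V : Type*} {G : SimpleGraph V} (L : V → E → SignType)
    (X Y : E → SignType) {a b : V} (P : G.Walk a b) : Prop :=
  ∀ z ∈ P.support, plusSupp (L z) ⊆ plusSupp X ∪ plusSupp Y ∧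
    minusSupp (L z) ⊆ minusSupp X ∪ minusSupp Y

/-- Per-coordinate contribution to the potential. -/
def phiCoord (X W : E → SignType) (e : E) : ℕ :=
  (if (X e = 1 ∧ W e = -1) ∨ (X e = -1 ∧ W e = 1) then 2 else 0) +
  (if (X e = 0) ≠ (W e = 0) then 1 else 0)

lemma phi_eq (X W : E → SignType) :
    2 * (sep X W).card + (symmDiff (zeroSupp X) (zeroSupp W)).card
      = ∑ e, phiCoord X W e := by
  have h1 : symmDiff (zeroSupp X) (zeroSupp W)
      = univ.filter (fun e => (X e = 0) ≠ (W e = 0)) := by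
    ext e
    simp [Finset.mem_symmDiff, zeroSupp]
    tauto
  rw [h1, sep, Finset.card_filter, Finset.card_filter, Finset.mul_sum,
    ← Finset.sum_add_distrib]
  apply Finset.sum_congr rfl
  intro e _
  simp only [phiCoord]
  split <;> split <;> simp

lemma phi_step (X Y W : E → SignType) (hadj : OMAdj X Y) :
    ∑ e, phiCoord X W e ≤ (∑ e, phiCoord Y W e) + 2 := by
  obtain ⟨hcard, hsep⟩ := hadj
  set D : Finset E := univ.filter (fun e => X e ≠ Y e) with hD
  have hsub : D ⊆ symmDiff (zeroSupp X) (zeroSupp Y) := by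
    intro e he
    simp [hD] at he
    have hns : e ∉ sep X Y := by rw [hsep]; exact Finset.notMem_empty e
    simp [sep] at hns
    simp [Finset.mem_symmDiff, zeroSupp]
    cases hx : X e <;> cases hy : Y e <;> simp_all
  have hDcard : D.card ≤ 2 := hcard ▸ Finset.card_le_card hsub
  have hpt : ∀ e, phiCoord X W e ≤ phiCoord Y W e + (if e ∈ D then 1 else 0) := by
    intro e
    by_cases he : e ∈ D
    · simp only [he, if_pos]
      have hns : e ∉ sep X Y := by rw [hsep]; exact Finset.notMem_empty e
      simp [sep] at hns
      unfold phiCoord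
      cases hx : X e <;> cases hy : Y e <;> cases hw : W e <;> simp_all
    · have : X e = Y e := by
        by_contra h
        exact he (by simp [hD, h])
      simp [phiCoord, this]
  calc ∑ e, phiCoord X W e ≤ ∑ e, (phiCoord Y W e + (if e ∈ D then 1 else 0)) :=
        Finset.sum_le_sum fun e _ => hpt e
    _ = (∑ e, phiCoord Y W e) + D.card := by
        rw [Finset.sum_add_distrib]
        congr 1
        simp [Finset.card_filter, hD]
    _ ≤ (∑ e, phiCoord Y W e) + 2 := by omega

lemma phi_self (X : E → SignType) : ∑ e, phiCoord X X e = 0 := by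
  apply Finset.sum_eq_zero
  intro e _
  unfold phiCoord
  cases hx : X e <;> simp_all

lemma phi_walk {V : Type*} (G : SimpleGraph V) (n r : ℕ) (L : V → E → SignType)
    (hL : IsSignLabeling G n r L) (w : V) :
    ∀ (v : V) (P : G.Walk v w), ∑ e, phiCoord (L v) (L w) e ≤ 2 * P.length := by
  intro v P
  induction P with
  | nil => simp [phi_self]
  | cons h p ih =>
    simp only [SimpleGraph.Walk.length_cons]
    refine le_trans (phi_step _ _ _ ((hL.2.2.2.2 _ _).mp h)) ?_
    omega

theorem stmt3 {V : Type*} (G : SimpleGraph V) (n r : ℕ) (L : V → E → SignType)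
    (hL : IsSignLabeling G n r L) (v w : V) (hreach : G.Reachable v w) :
    2 * (sep (L v) (L w)).card +
      (symmDiff (zeroSupp (L v)) (zeroSupp (L w))).card ≤ 2 * G.dist v w := by
  obtain ⟨P, hP⟩ := hreach.exists_walk_length_eq_dist
  rw [phi_eq, ← hP]
  exact phi_walk G n r L hL w v P
end

section
/- In the proof of the rank-2 distance formula: if M is a uniform oriented matroid, v, w cocircuits lying in a common coline with L(v) ≠ -L(w) and L^0(v) \ L^0(w) = {e}, and u is the unique neighbor of v in the cocircuit graph with L(u)_e = L(w)_e, then |S(L(u),L(w))| = |S(L(v),L(w))| - 1 whenever S(L(v),L(w)) ≠ ∅. -/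
open Finset

variable {E : Type*} [Fintype E] [DecidableEq E]

set_option linter.unusedSectionVars false

section Helpers

lemma mem_sep_iff {X Y : E → SignType} {k : E} :
    k ∈ sep X Y ↔ (X k = 1 ∧ Y k = -1) ∨ (X k = -1 ∧ Y k = 1) := by simp [sep]

lemma mem_zeroSupp {X : E → SignType} {k : E} : k ∈ zeroSupp X ↔ X k = 0 := by simp [zeroSupp]

lemma st_resolve {a b : SignType} (h : ¬((a = 1 ∧ b = -1) ∨ (a = -1 ∧ b = 1)))
    (ha : a ≠ 0) (hb : b ≠ 0) : a = b := by
  cases a <;> cases b <;> revert h ha hb <;> decide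

lemma sep_props {X Y : E → SignType} {k : E} (h : k ∈ sep X Y) :
    X k ≠ 0 ∧ Y k ≠ 0 ∧ Y k = -X k := by
  rw [mem_sep_iff] at h
  rcases h with ⟨h1, h2⟩ | ⟨h1, h2⟩ <;> rw [h1, h2] <;> exact ⟨by decide, by decide, by decide⟩

lemma sep_empty_eq {X Y : E → SignType} (h : sep X Y = ∅) {k : E}
    (hx : X k ≠ 0) (hy : Y k ≠ 0) : X k = Y k := by
  have hk : k ∉ sep X Y := by simp [h]
  rw [mem_sep_iff] at hk
  exact st_resolve hk hx hy

lemma not_mem_sep_of_eq {X Y : E → SignType} {k : E} (h : X k = Y k) : k ∉ sep X Y := by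
  rw [mem_sep_iff, h]
  rintro (⟨h1, h2⟩ | ⟨h1, h2⟩) <;> rw [h1] at h2 <;> exact absurd h2 (by decide)

lemma not_mem_sep_left {X Y : E → SignType} {k : E} (h : X k = 0) : k ∉ sep X Y := by
  rw [mem_sep_iff, h]
  rintro (⟨h1, _⟩ | ⟨h1, _⟩) <;> exact absurd h1 (by decide)

lemma not_mem_sep_right {X Y : E → SignType} {k : E} (h : Y k = 0) : k ∉ sep X Y := by
  rw [mem_sep_iff, h]
  rintro (⟨_, h2⟩ | ⟨_, h2⟩) <;> exact absurd h2 (by decide)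

lemma mem_sep_of_neg {X Y : E → SignType} {k : E} (hx : X k ≠ 0) (h : Y k = -X k) :
    k ∈ sep X Y := by
  rw [mem_sep_iff, h]
  revert hx
  generalize X k = a
  cases a <;> decide

lemma sdiff_singletons {A B : Finset E} {e f : E} (h1 : A \ B = {e}) (h2 : B \ A = {f}) :
    B = (A \ {e}) ∪ {f} := by
  have heA : e ∈ A ∧ e ∉ B := by
    have : e ∈ A \ B := by rw [h1]; simp
    simpa [Finset.mem_sdiff] using this
  have hfB : f ∈ B ∧ f ∉ A := by
    have : f ∈ B \ A := by rw [h2]; simp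
    simpa [Finset.mem_sdiff] using this
  ext k
  simp only [Finset.mem_union, Finset.mem_sdiff, Finset.mem_singleton]
  constructor
  · intro hk
    by_cases hkA : k ∈ A
    · left
      refine ⟨hkA, ?_⟩
      rintro rfl
      exact heA.2 hk
    · right
      have : k ∈ B \ A := Finset.mem_sdiff.mpr ⟨hk, hkA⟩
      rw [h2] at this
      simpa using this
  · rintro (⟨hkA, hke⟩ | rfl)
    · by_contra hkB
      have : k ∈ A \ B := Finset.mem_sdiff.mpr ⟨hkA, hkB⟩
      rw [h1] at this
      exact hke (by simpa using this)
    · exact hfB.1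

lemma sdiff_of_symmDiff_two {A B : Finset E} (hc : (symmDiff A B).card = 2)
    (hAB : A.card = B.card) {e : E} (he : e ∈ A \ B) :
    A \ B = {e} ∧ ∃ f, B \ A = {f} := by
  have hdisj : Disjoint (A \ B) (B \ A) := disjoint_sdiff_sdiff
  have hsymm : symmDiff A B = (A \ B) ∪ (B \ A) := by
    rw [symmDiff_def]; rfl
  have hcards : (A \ B).card + (B \ A).card = 2 := by
    rw [← Finset.card_union_of_disjoint hdisj, ← hsymm, hc]
  have h1 : (A \ B).card + (A ∩ B).card = A.card := Finset.card_sdiff_add_card_inter A B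
  have h2 : (B \ A).card + (B ∩ A).card = B.card := Finset.card_sdiff_add_card_inter B A
  rw [Finset.inter_comm] at h2
  have hone : (A \ B).card = 1 := by omega
  obtain ⟨a, ha⟩ := Finset.card_eq_one.mp hone
  have hae : a = e := by
    rw [ha] at he
    exact (Finset.mem_singleton.mp he).symm
  subst hae
  exact ⟨ha, Finset.card_eq_one.mp (by omega)⟩

lemma supp_eq_of_zeroSupp_eq {X Y : E → SignType} (h : zeroSupp X = zeroSupp Y) :
    suppOf X = suppOf Y := by
  ext k
  have := Finset.ext_iff.mp h k
  simp only [mem_zeroSupp] at this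
  simp [suppOf, this]

lemma zeroSupp_eq_compl (X : E → SignType) : zeroSupp X = (suppOf X)ᶜ := by
  ext k; simp [zeroSupp, suppOf]

lemma card_zeroSupp_eq {n r : ℕ} {C : Finset (E → SignType)} (h : IsUOM n r C)
    {X Y : E → SignType} (hX : X ∈ C) (hY : Y ∈ C) :
    (zeroSupp X).card = (zeroSupp Y).card := by
  rw [zeroSupp_eq_compl, zeroSupp_eq_compl, Finset.card_compl, Finset.card_compl,
    h.2.1 X hX, h.2.1 Y hY]

lemma neg_mem_of_mem {n r : ℕ} {C : Finset (E → SignType)} (h : IsUOM n r C)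
    {X : E → SignType} (hX : X ∈ C) : -X ∈ C := by
  obtain ⟨X₀, hX₀C, hsupp, hnegC, hne, huniq⟩ := h.2.2.1 (suppOf X) (h.2.1 X hX)
  rcases huniq X hX rfl with h' | h'
  · rw [h']; exact hnegC
  · rw [h', neg_neg]; exact hX₀C

lemma eq_or_neg_of_supp_eq {n r : ℕ} {C : Finset (E → SignType)} (h : IsUOM n r C)
    {X Y : E → SignType} (hX : X ∈ C) (hY : Y ∈ C)
    (hs : suppOf X = suppOf Y) : Y = X ∨ Y = -X := by
  obtain ⟨X₀, hX₀C, hsupp, hnegC, hne, huniq⟩ := h.2.2.1 (suppOf X) (h.2.1 X hX)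
  rcases huniq X hX rfl with h1 | h1 <;> rcases huniq Y hY hs.symm with h2 | h2
  · left; rw [h1, h2]
  · right; rw [h1, h2]
  · right; rw [h1, h2, neg_neg]
  · left; rw [h1, h2]

/-- Uniqueness of the neighbor of `v` on the coline with prescribed sign at `e`. -/
lemma neighbor_unique {n r : ℕ} {C : Finset (E → SignType)} (h : IsUOM n r C)
    {v u1 u2 : E → SignType} (hv : v ∈ C) (h1 : u1 ∈ C) (h2 : u2 ∈ C)
    {e : E} (hve : v e = 0)
    (hs1 : sep v u1 = ∅) (hs2 : sep v u2 = ∅)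
    (hz1 : zeroSupp v \ zeroSupp u1 = {e}) (hz2 : zeroSupp v \ zeroSupp u2 = {e})
    {f1 f2 : E} (hf1 : zeroSupp u1 \ zeroSupp v = {f1}) (hf2 : zeroSupp u2 \ zeroSupp v = {f2})
    (he : u1 e = u2 e) (hne0 : u1 e ≠ 0) : u1 = u2 := by
  have hzu1 : zeroSupp u1 = (zeroSupp v \ {e}) ∪ {f1} := sdiff_singletons hz1 hf1
  have hzu2 : zeroSupp u2 = (zeroSupp v \ {e}) ∪ {f2} := sdiff_singletons hz2 hf2
  have hf1v : f1 ∉ zeroSupp v ∧ f1 ∈ zeroSupp u1 := by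
    have : f1 ∈ zeroSupp u1 \ zeroSupp v := by rw [hf1]; simp
    exact ⟨(Finset.mem_sdiff.mp this).2, (Finset.mem_sdiff.mp this).1⟩
  have hf2v : f2 ∉ zeroSupp v ∧ f2 ∈ zeroSupp u2 := by
    have : f2 ∈ zeroSupp u2 \ zeroSupp v := by rw [hf2]; simp
    exact ⟨(Finset.mem_sdiff.mp this).2, (Finset.mem_sdiff.mp this).1⟩
  by_cases hff : f1 = f2
  · -- same zero support, hence u1 = ±u2, and sign at e decides
    subst hff
    have hzz : zeroSupp u1 = zeroSupp u2 := by rw [hzu1, hzu2]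
    rcases eq_or_neg_of_supp_eq h h1 h2 (supp_eq_of_zeroSupp_eq hzz) with h' | h'
    · exact h'.symm
    · exfalso
      have : u2 e = -u1 e := by rw [h']; simp
      rw [← he] at this
      cases hcase : u1 e <;> rw [hcase] at this hne0 <;> revert this hne0 <;> decide
  · -- eliminate e between u1 and -u2
    exfalso
    have hnu2 : -u2 ∈ C := neg_mem_of_mem h h2
    have hesep : e ∈ sep u1 (-u2) := by
      apply mem_sep_of_neg hne0
      show -u2 e = -u1 e
      rw [he]
    obtain ⟨Z, hZC, hZe, hZ⟩ := h.2.2.2 u1 h1 (-u2) hnu2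
      (by intro hq; rw [neg_neg] at hq; subst hq; rw [hf1] at hf2; exact hff (Finset.singleton_inj.mp hf2)) e hesep
    -- zeroSupp Z = zeroSupp v
    have hef1 : e ≠ f1 := fun hh => hf1v.1 (hh ▸ mem_zeroSupp.mpr hve)
    have hef2 : e ≠ f2 := fun hh => hf2v.1 (hh ▸ mem_zeroSupp.mpr hve)
    have hsub : zeroSupp v ⊆ zeroSupp Z := by
      intro k hk
      rw [mem_zeroSupp]
      by_cases hke : k = e
      · rw [hke]; exact hZe
      · have hk1 : u1 k = 0 := by
          have : k ∈ zeroSupp u1 := by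
            rw [hzu1]
            exact Finset.mem_union_left _ (Finset.mem_sdiff.mpr ⟨hk, by simpa using hke⟩)
          exact mem_zeroSupp.mp this
        have hk2 : u2 k = 0 := by
          have : k ∈ zeroSupp u2 := by
            rw [hzu2]
            exact Finset.mem_union_left _ (Finset.mem_sdiff.mpr ⟨hk, by simpa using hke⟩)
          exact mem_zeroSupp.mp this
        rcases hZ k hke with h' | h' | h'
        · rw [h', hk1]
        · rw [h']; show -u2 k = 0; rw [hk2]; rfl
        · exact h'
    have hzZ : zeroSupp Z = zeroSupp v := by
      refine (Finset.eq_of_subset_of_card_le hsub ?_).symm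
      exact le_of_eq (card_zeroSupp_eq h hZC hv)
    have hvf1 : v f1 ≠ 0 := fun hh => hf1v.1 (mem_zeroSupp.mpr hh)
    have hvf2 : v f2 ≠ 0 := fun hh => hf2v.1 (mem_zeroSupp.mpr hh)
    -- Z = v or Z = -v
    have hZf1 : Z f1 = -v f1 := by
      have hz1' : Z f1 ≠ 0 := by
        intro hh
        exact hf1v.1 (hzZ ▸ mem_zeroSupp.mpr hh)
      rcases hZ f1 (Ne.symm hef1) with h' | h' | h'
      · exact absurd (h'.trans (mem_zeroSupp.mp hf1v.2)) hz1'
      · rw [h']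
        show -u2 f1 = -v f1
        have hu2f1 : u2 f1 ≠ 0 := by
          intro hh
          have : f1 ∈ zeroSupp u2 := mem_zeroSupp.mpr hh
          rw [hzu2] at this
          rcases Finset.mem_union.mp this with h'' | h''
          · exact hf1v.1 (Finset.mem_sdiff.mp h'').1
          · exact hff (Finset.mem_singleton.mp h'')
        rw [sep_empty_eq hs2 hvf1 hu2f1]
      · exact absurd h' hz1'
    have hZf2 : Z f2 = v f2 := by
      have hz2' : Z f2 ≠ 0 := by
        intro hh
        exact hf2v.1 (hzZ ▸ mem_zeroSupp.mpr hh)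
      rcases hZ f2 (Ne.symm hef2) with h' | h' | h'
      · rw [h']
        have hu1f2 : u1 f2 ≠ 0 := by
          intro hh
          have : f2 ∈ zeroSupp u1 := mem_zeroSupp.mpr hh
          rw [hzu1] at this
          rcases Finset.mem_union.mp this with h'' | h''
          · exact hf2v.1 (Finset.mem_sdiff.mp h'').1
          · exact hff (Finset.mem_singleton.mp h'').symm
        rw [← sep_empty_eq hs1 hvf2 hu1f2]
      · exfalso
        apply hz2'
        rw [h']
        show -u2 f2 = 0
        rw [mem_zeroSupp.mp hf2v.2]
        rfl
      · exact absurd h' hz2'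
    rcases eq_or_neg_of_supp_eq h hv hZC ((supp_eq_of_zeroSupp_eq hzZ).symm) with hZv | hZv
    · rw [hZv] at hZf1
      apply hvf1
      revert hZf1
      generalize v f1 = a
      cases a <;> decide
    · rw [hZv] at hZf2
      have hZf2' : -(v f2) = v f2 := by simpa using hZf2
      apply hvf2
      revert hZf2'
      generalize v f2 = a
      cases a <;> decide

/-- Key lemma: the element zeroed out by the neighbor `u` separates `v` and `w`. -/
lemma keyB {n r : ℕ} {C : Finset (E → SignType)} (h : IsUOM n r C) :
    ∀ s : ℕ, ∀ (v w u : E → SignType) (e f : E), v ∈ C → w ∈ C → u ∈ C →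
      (sep v w).card ≤ s →
      zeroSupp v \ zeroSupp w = {e} → OMAdj v u → u e = w e → sep v w ≠ ∅ →
      f ∈ zeroSupp u \ zeroSupp v → f ∈ sep v w := by
  intro s
  induction s with
  | zero =>
    intro v w u e f hv hw hu hcard hzero hadj hue hsep hf
    exact absurd (Finset.card_eq_zero.mp (Nat.le_zero.mp hcard)) hsep
  | succ s ih =>
    intro v w u e f hv hw hu hcard hzero hadj hue hsep hf
    have hemem : e ∈ zeroSupp v \ zeroSupp w := by rw [hzero]; simp
    have hve : v e = 0 := mem_zeroSupp.mp (Finset.mem_sdiff.mp hemem).1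
    have hwe : w e ≠ 0 := fun hh => (Finset.mem_sdiff.mp hemem).2 (mem_zeroSupp.mpr hh)
    have hue0 : u e ≠ 0 := by rw [hue]; exact hwe
    obtain ⟨hc2, hsvu⟩ := hadj
    have hevu : e ∈ zeroSupp v \ zeroSupp u :=
      Finset.mem_sdiff.mpr ⟨mem_zeroSupp.mpr hve, fun hh => hue0 (mem_zeroSupp.mp hh)⟩
    obtain ⟨hzvu, f', hfu'⟩ := sdiff_of_symmDiff_two hc2 (card_zeroSupp_eq h hv hu) hevu
    have hff' : f' = f := by
      have hmem := hf
      rw [hfu'] at hmem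
      exact (Finset.mem_singleton.mp hmem).symm
    rw [hff'] at hfu'
    have hfmem := Finset.mem_sdiff.mp hf
    have huf : u f = 0 := mem_zeroSupp.mp hfmem.1
    have hvf : v f ≠ 0 := fun hh => hfmem.2 (mem_zeroSupp.mpr hh)
    have hef : e ≠ f := fun hh => hvf (hh ▸ hve)
    have hzu : zeroSupp u = (zeroSupp v \ {e}) ∪ {f} := sdiff_singletons hzvu hfu'
    by_cases hwf : w f = 0
    · exfalso
      have hfw : f ∈ zeroSupp w \ zeroSupp v :=
        Finset.mem_sdiff.mpr ⟨mem_zeroSupp.mpr hwf, hfmem.2⟩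
      have h1 : (zeroSupp v \ zeroSupp w).card + (zeroSupp v ∩ zeroSupp w).card
          = (zeroSupp v).card := Finset.card_sdiff_add_card_inter _ _
      have h2 : (zeroSupp w \ zeroSupp v).card + (zeroSupp w ∩ zeroSupp v).card
          = (zeroSupp w).card := Finset.card_sdiff_add_card_inter _ _
      have hcards := card_zeroSupp_eq h hv hw
      rw [Finset.inter_comm] at h2
      have hone : (zeroSupp w \ zeroSupp v).card = 1 := by
        rw [hzero] at h1
        simp only [Finset.card_singleton] at h1
        omega
      obtain ⟨g, hg⟩ := Finset.card_eq_one.mp hone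
      have hfg : g = f := by
        rw [hg] at hfw
        exact (Finset.mem_singleton.mp hfw).symm
      rw [hfg] at hg
      have hzw : zeroSupp w = (zeroSupp v \ {e}) ∪ {f} := sdiff_singletons hzero hg
      have hzwu : zeroSupp u = zeroSupp w := by rw [hzu, hzw]
      rcases eq_or_neg_of_supp_eq h hu hw (supp_eq_of_zeroSupp_eq hzwu) with h' | h'
      · apply hsep
        rw [h']
        exact hsvu
      · rw [h'] at hue
        have hue' : u e = -(u e) := by simpa using hue
        revert hue0 hue'
        generalize u e = a
        cases a <;> decide
    · obtain ⟨h0, hh0⟩ := Finset.nonempty_iff_ne_empty.mpr hsep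
      obtain ⟨hvh0, hwh0, hwh0'⟩ := sep_props hh0
      obtain ⟨Z, hZC, hZh0, hZ⟩ := h.2.2.2 v hv w hw
        (fun hq => hwe (by have := congrFun hq e; rw [hve] at this; simpa using this.symm)) h0 hh0
      have heh0 : e ≠ h0 := fun hh => hvh0 (hh ▸ hve)
      have hh0v : h0 ∉ zeroSupp v := fun hh => hvh0 (mem_zeroSupp.mp hh)
      have hsub : (zeroSupp v \ {e}) ∪ {h0} ⊆ zeroSupp Z := by
        intro k hk
        rw [mem_zeroSupp]
        rcases Finset.mem_union.mp hk with hk' | hk'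
        · obtain ⟨hkv, hke⟩ := Finset.mem_sdiff.mp hk'
          have hkh0 : k ≠ h0 := fun hh => hh0v (hh ▸ hkv)
          have hkw : w k = 0 := by
            by_contra hkw
            have hmem : k ∈ zeroSupp v \ zeroSupp w :=
              Finset.mem_sdiff.mpr ⟨hkv, fun hh => hkw (mem_zeroSupp.mp hh)⟩
            rw [hzero] at hmem
            exact hke hmem
          rcases hZ k hkh0 with h' | h' | h'
          · rw [h']; exact mem_zeroSupp.mp hkv
          · rw [h', hkw]
          · exact h'
        · rw [Finset.mem_singleton.mp hk']
          exact hZh0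
      have hdisj : Disjoint (zeroSupp v \ {e}) ({h0} : Finset E) :=
        Finset.disjoint_singleton_right.mpr (fun hh => hh0v (Finset.mem_sdiff.mp hh).1)
      have hcardL : ((zeroSupp v \ {e}) ∪ {h0}).card = (zeroSupp v).card := by
        have hesub : ({e} : Finset E) ⊆ zeroSupp v :=
          Finset.singleton_subset_iff.mpr (mem_zeroSupp.mpr hve)
        rw [Finset.card_union_of_disjoint hdisj, Finset.card_sdiff_of_subset hesub,
          Finset.card_singleton, Finset.card_singleton]
        have hpos : 0 < (zeroSupp v).card := Finset.card_pos.mpr ⟨e, mem_zeroSupp.mpr hve⟩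
        omega
      have hzZ : zeroSupp Z = (zeroSupp v \ {e}) ∪ {h0} := by
        refine (Finset.eq_of_subset_of_card_le hsub ?_).symm
        rw [hcardL]
        exact le_of_eq (card_zeroSupp_eq h hZC hv)
      have hZe : Z e = w e := by
        have heZ : Z e ≠ 0 := by
          intro hh
          have hmem : e ∈ zeroSupp Z := mem_zeroSupp.mpr hh
          rw [hzZ] at hmem
          rcases Finset.mem_union.mp hmem with h' | h'
          · exact (Finset.mem_sdiff.mp h').2 (Finset.mem_singleton_self e)
          · exact heh0 (Finset.mem_singleton.mp h')
        rcases hZ e heh0 with h' | h' | h'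
        · exact absurd (h'.trans hve) heZ
        · exact h'
        · exact absurd h' heZ
      have hueZ : u e = Z e := by rw [hue, ← hZe]
      have hzvZ : zeroSupp v \ zeroSupp Z = {e} := by
        rw [hzZ]
        ext k
        constructor
        · intro hk
          obtain ⟨hkv, hk2⟩ := Finset.mem_sdiff.mp hk
          by_contra hke
          exact hk2 (Finset.mem_union_left _ (Finset.mem_sdiff.mpr ⟨hkv, hke⟩))
        · intro hk
          rw [Finset.mem_singleton] at hk
          subst hk
          refine Finset.mem_sdiff.mpr ⟨mem_zeroSupp.mpr hve, fun hh => ?_⟩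
          rcases Finset.mem_union.mp hh with h' | h'
          · exact (Finset.mem_sdiff.mp h').2 (Finset.mem_singleton_self k)
          · exact heh0 (Finset.mem_singleton.mp h')
      have hsvZ : sep v Z ⊆ (sep v w).erase h0 := by
        intro k hk
        obtain ⟨hvk, hZk, hZk'⟩ := sep_props hk
        have hkh0 : k ≠ h0 := fun hh => hZk (by rw [hh]; exact hZh0)
        have hZkw : Z k = w k := by
          rcases hZ k hkh0 with h' | h' | h'
          · exfalso
            have hcontr : v k = -(v k) := h'.symm.trans hZk'
            revert hvk hcontr
            generalize v k = a
            cases a <;> decide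
          · exact h'
          · exact absurd h' hZk
        refine Finset.mem_erase.mpr ⟨hkh0, ?_⟩
        exact mem_sep_of_neg hvk (by rw [← hZkw]; exact hZk')
      have hcardZ : (sep v Z).card ≤ s := by
        have h1 : (sep v Z).card ≤ ((sep v w).erase h0).card := Finset.card_le_card hsvZ
        rw [Finset.card_erase_of_mem hh0] at h1
        omega
      by_cases hsvZe : sep v Z = ∅
      · have hzZv : zeroSupp Z \ zeroSupp v = {h0} := by
          rw [hzZ]
          ext k
          constructor
          · intro hk
            obtain ⟨hk1, hk2⟩ := Finset.mem_sdiff.mp hk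
            rcases Finset.mem_union.mp hk1 with h' | h'
            · exact absurd (Finset.mem_sdiff.mp h').1 hk2
            · exact h'
          · intro hk
            rw [Finset.mem_singleton] at hk
            subst hk
            exact Finset.mem_sdiff.mpr
              ⟨Finset.mem_union_right _ (Finset.mem_singleton_self k), hh0v⟩
        have huZ : u = Z :=
          neighbor_unique h hv hu hZC hve hsvu hsvZe hzvu hzvZ hfu' hzZv hueZ hue0
        have hfZ : f ∈ zeroSupp Z := by rw [← huZ]; exact hfmem.1
        rw [hzZ] at hfZ
        rcases Finset.mem_union.mp hfZ with h' | h'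
        · exact absurd (Finset.mem_sdiff.mp h').1 hfmem.2
        · rw [Finset.mem_singleton.mp h']
          exact hh0
      · have hind := ih v Z u e f hv hZC hu hcardZ hzvZ ⟨hc2, hsvu⟩ hueZ hsvZe hf
        exact Finset.mem_of_mem_erase (hsvZ hind)

end Helpers

theorem stmt5 (n r : ℕ) (C : Finset (E → SignType)) (h : IsUOM n r C)
    (v w u : {X : E → SignType // X ∈ C}) (e : E)
    (hne : w.1 ≠ -v.1)
    (hzero : zeroSupp v.1 \ zeroSupp w.1 = {e})
    (hadj : (cocircuitGraph C).Adj v u) (hue : u.1 e = w.1 e)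
    (hsep : sep v.1 w.1 ≠ ∅) :
    (sep u.1 w.1).card = (sep v.1 w.1).card - 1 := by
  have hadj' : OMAdj v.1 u.1 := hadj
  obtain ⟨hc2, hsvu⟩ := hadj'
  have hemem : e ∈ zeroSupp v.1 \ zeroSupp w.1 := by rw [hzero]; simp
  have hve : v.1 e = 0 := mem_zeroSupp.mp (Finset.mem_sdiff.mp hemem).1
  have hwe : w.1 e ≠ 0 := fun hh => (Finset.mem_sdiff.mp hemem).2 (mem_zeroSupp.mpr hh)
  have hue0 : u.1 e ≠ 0 := by rw [hue]; exact hwe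
  have hevu : e ∈ zeroSupp v.1 \ zeroSupp u.1 :=
    Finset.mem_sdiff.mpr ⟨mem_zeroSupp.mpr hve, fun hh => hue0 (mem_zeroSupp.mp hh)⟩
  obtain ⟨hzvu, f, hfu⟩ := sdiff_of_symmDiff_two hc2 (card_zeroSupp_eq h v.2 u.2) hevu
  have hfmem : f ∈ zeroSupp u.1 \ zeroSupp v.1 := by rw [hfu]; simp
  have huf : u.1 f = 0 := mem_zeroSupp.mp (Finset.mem_sdiff.mp hfmem).1
  have hvf : v.1 f ≠ 0 := fun hh => (Finset.mem_sdiff.mp hfmem).2 (mem_zeroSupp.mpr hh)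
  have hzu : zeroSupp u.1 = (zeroSupp v.1 \ {e}) ∪ {f} := sdiff_singletons hzvu hfu
  have hfsep : f ∈ sep v.1 w.1 :=
    keyB h (sep v.1 w.1).card v.1 w.1 u.1 e f v.2 w.2 u.2 le_rfl hzero ⟨hc2, hsvu⟩ hue hsep hfmem
  have hseq : sep u.1 w.1 = (sep v.1 w.1).erase f := by
    ext k
    by_cases hkf : k = f
    · subst hkf
      constructor
      · intro hk
        exact absurd hk (not_mem_sep_left huf)
      · intro hk
        exact absurd rfl (Finset.mem_erase.mp hk).1
    · by_cases hke : k = e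
      · subst hke
        constructor
        · intro hk
          exact absurd hk (not_mem_sep_of_eq hue)
        · intro hk
          exact absurd (Finset.mem_of_mem_erase hk) (not_mem_sep_left hve)
      · rw [Finset.mem_erase]
        by_cases hkv : v.1 k = 0
        · have hku : u.1 k = 0 := by
            have hmem : k ∈ zeroSupp u.1 := by
              rw [hzu]
              exact Finset.mem_union_left _
                (Finset.mem_sdiff.mpr ⟨mem_zeroSupp.mpr hkv, fun hh => hke (by simpa using hh)⟩)
            exact mem_zeroSupp.mp hmem
          constructor
          · intro hk
            exact absurd hk (not_mem_sep_left hku)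
          · rintro ⟨_, hk⟩
            exact absurd hk (not_mem_sep_left hkv)
        · have hku : u.1 k ≠ 0 := by
            intro hh
            have hmem : k ∈ zeroSupp u.1 \ zeroSupp v.1 :=
              Finset.mem_sdiff.mpr ⟨mem_zeroSupp.mpr hh, fun h' => hkv (mem_zeroSupp.mp h')⟩
            rw [hfu] at hmem
            exact hkf (Finset.mem_singleton.mp hmem)
          have hkuv : u.1 k = v.1 k := (sep_empty_eq hsvu hkv hku).symm
          constructor
          · intro hk
            refine ⟨hkf, ?_⟩
            rw [mem_sep_iff] at hk ⊢
            rw [hkuv] at hk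
            exact hk
          · rintro ⟨_, hk⟩
            rw [mem_sep_iff] at hk ⊢
            rw [hkuv]
            exact hk
  rw [hseq, Finset.card_erase_of_mem hfsep]
end

section
/- If X and Y are two sign vectors each with support of size n-r+1 on an n-element ground set, and X ≠ -Y, then |S(X,Y)| + (1/2)|X^0 Δ Y^0| ≤ n - r + 1. -/
open Finset

variable {E : Type*} [Fintype E] [DecidableEq E]

theorem stmt10 (n r : ℕ) (hE : Fintype.card E = n) (X Y : E → SignType)
    (hX : (suppOf X).card = n - r + 1) (hY : (suppOf Y).card = n - r + 1)
    (hne : X ≠ -Y) :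
    2 * (sep X Y).card + (symmDiff (zeroSupp X) (zeroSupp Y)).card
      ≤ 2 * (n - r + 1) := by
  have hz : symmDiff (zeroSupp X) (zeroSupp Y) = symmDiff (suppOf X) (suppOf Y) := by
    ext e
    simp [symmDiff, zeroSupp, suppOf, Finset.mem_union, Finset.mem_sdiff]
    rcases X e <;> rcases Y e <;> simp
  have hsub : sep X Y ⊆ suppOf X ∩ suppOf Y := by
    intro e he
    simp [sep] at he
    simp [suppOf]
    rcases he with ⟨h1, h2⟩ | ⟨h1, h2⟩ <;> simp [h1, h2]
  have hcard : (sep X Y).card ≤ (suppOf X ∩ suppOf Y).card := Finset.card_le_card hsub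
  have h1 : (suppOf X \ suppOf Y).card + (suppOf X ∩ suppOf Y).card = (suppOf X).card :=
    Finset.card_sdiff_add_card_inter _ _
  have h2 : (suppOf Y \ suppOf X).card + (suppOf Y ∩ suppOf X).card = (suppOf Y).card :=
    Finset.card_sdiff_add_card_inter _ _
  have hi : (suppOf Y ∩ suppOf X).card = (suppOf X ∩ suppOf Y).card := by
    rw [Finset.inter_comm]
  have hd : (symmDiff (suppOf X) (suppOf Y)).card
      = (suppOf X \ suppOf Y).card + (suppOf Y \ suppOf X).card := by
    rw [symmDiff_def, Finset.sup_eq_union]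
    exact Finset.card_union_of_disjoint disjoint_sdiff_sdiff
  rw [hz, hd]
  omega
end

section
/- Let M be a uniform oriented matroid and E' ⊆ E. The cocircuit graph of the contraction M/E' is isomorphic to the subgraph of the cocircuit graph of M induced by the cocircuits vanishing on E', via the restriction map X ↦ X|_{E\E'}. -/
open Finset

variable {E : Type*} [Fintype E] [DecidableEq E]

theorem stmt15 (n r : ℕ) (C : Finset (E → SignType)) (h : IsUOM n r C)
    (E' : Finset E) :
    (∀ X ∈ C, ∀ Y ∈ C, (∀ e ∈ E', X e = 0) → (∀ e ∈ E', Y e = 0) →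
      (OMAdj X Y ↔
        OMAdj (fun e : {e : E // e ∉ E'} => X e.1)
              (fun e : {e : E // e ∉ E'} => Y e.1))) ∧
    Set.BijOn (fun X (e : {e : E // e ∉ E'}) => X e.1)
      {X : E → SignType | X ∈ C ∧ ∀ e ∈ E', X e = 0}
      ↑((C.filter fun X => ∀ e ∈ E', X e = 0).image
        (fun X (e : {e : E // e ∉ E'}) => X e.1)) := by
  constructor
  · intro X hX Y hY hX0 hY0
    have hcard : (symmDiff (zeroSupp (fun e : {e : E // e ∉ E'} => X e.1))
        (zeroSupp (fun e : {e : E // e ∉ E'} => Y e.1))).card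
        = (symmDiff (zeroSupp X) (zeroSupp Y)).card := by
      apply Finset.card_bij (fun a _ => a.1)
      · intro a ha
        simp only [Finset.mem_symmDiff, zeroSupp, Finset.mem_filter, Finset.mem_univ,
          true_and] at ha ⊢
        tauto
      · intro a _ b _ hab
        exact Subtype.ext hab
      · intro b hb
        simp only [Finset.mem_symmDiff, zeroSupp, Finset.mem_filter, Finset.mem_univ,
          true_and] at hb
        have hbE' : b ∉ E' := by
          intro hmem
          rcases hb with ⟨h1,h2⟩|⟨h1,h2⟩
          · exact h2 (hY0 b hmem)
          · exact h2 (hX0 b hmem)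
        refine ⟨⟨b, hbE'⟩, ?_, rfl⟩
        simp only [Finset.mem_symmDiff, zeroSupp, Finset.mem_filter, Finset.mem_univ,
          true_and]
        exact hb
    have hsep : sep X Y = ∅ ↔ sep (fun e : {e : E // e ∉ E'} => X e.1)
        (fun e : {e : E // e ∉ E'} => Y e.1) = ∅ := by
      simp only [Finset.eq_empty_iff_forall_notMem, sep, Finset.mem_filter,
        Finset.mem_univ, true_and]
      constructor
      · intro h' a ha
        exact h' a.1 ha
      · intro h' a ha
        have haE' : a ∉ E' := by
          intro hmem
          rcases ha with ⟨h1,_⟩|⟨h1,_⟩ <;> rw [hX0 a hmem] at h1 <;> exact absurd h1 (by decide)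
        exact h' ⟨a, haE'⟩ ha
    unfold OMAdj
    rw [hcard, hsep]
  · refine ⟨?_, ?_, ?_⟩
    · intro X hX
      simp only [Set.mem_setOf_eq] at hX
      simp only [Finset.coe_image, Set.mem_image, Finset.mem_coe, Finset.mem_filter]
      exact ⟨X, ⟨hX.1, hX.2⟩, rfl⟩
    · intro X hX Y hY hXY
      simp only [Set.mem_setOf_eq] at hX hY
      funext e
      by_cases he : e ∈ E'
      · rw [hX.2 e he, hY.2 e he]
      · exact congrFun hXY ⟨e, he⟩
    · intro Z hZ
      simp only [Finset.coe_image, Set.mem_image, Finset.mem_coe, Finset.mem_filter] at hZ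
      obtain ⟨X, ⟨hX1, hX2⟩, rfl⟩ := hZ
      exact ⟨X, ⟨hX1, hX2⟩, rfl⟩
end

section
/- Let G be a graph with sign labeling L. If v, w are vertices with e ∈ S(L(v),L(w)) and P is a crabbed (v,w)-path, then there exists a vertex u on P with L(u)_e = 0, and any such u satisfies L(u)_f ∈ {L(v)_f, L(w)_f, 0} for all f ≠ e. -/
open Finset

variable {E : Type*} [Fintype E] [DecidableEq E]

lemma walk_sign_const {E : Type*} [Fintype E] [DecidableEq E] {V : Type*} {G : SimpleGraph V}
    (L : V → E → SignType)
    (hadj : ∀ x y, G.Adj x y → sep (L x) (L y) = ∅) (e : E)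
    {a b : V} (P : G.Walk a b) (h : ∀ z ∈ P.support, L z e ≠ 0) :
    L a e = L b e := by
  induction P with
  | nil => rfl
  | @cons x y z hvc p ih =>
    have hs := hadj _ _ hvc
    have hx : L x e ≠ 0 := h _ (by simp)
    have hy : L y e ≠ 0 := h _ (by simp)
    have hne : e ∉ sep (L x) (L y) := by rw [hs]; simp
    simp only [sep, Finset.mem_filter, Finset.mem_univ, true_and] at hne
    have hxy : L x e = L y e := by
      cases hx' : L x e <;> cases hy' : L y e <;> simp_all
    rw [hxy]
    exact ih (fun u hu => h u (by simp [hu]))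

theorem stmt17 {V : Type*} (G : SimpleGraph V) (n r : ℕ) (L : V → E → SignType)
    (hL : IsSignLabeling G n r L) (v w : V) (e : E) (he : e ∈ sep (L v) (L w))
    (P : G.Walk v w) (hP : Crabbed L (L v) (L w) P) :
    (∃ u ∈ P.support, L u e = 0) ∧
    ∀ u ∈ P.support, L u e = 0 →
      ∀ f, f ≠ e → L u f = L v f ∨ L u f = L w f ∨ L u f = 0 := by
  simp only [sep, Finset.mem_filter, Finset.mem_univ, true_and] at he
  have hadj : ∀ x y, G.Adj x y → sep (L x) (L y) = ∅ := fun x y h =>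
    ((hL.2.2.2.2 x y).mp h).2
  constructor
  · by_contra hc
    push_neg at hc
    have := walk_sign_const L hadj e P hc
    rcases he with ⟨h1, h2⟩ | ⟨h1, h2⟩ <;> simp_all
  · intro u hu _ f _
    have hcp := (hP u hu).1
    have hcm := (hP u hu).2
    cases hf' : L u f with
    | zero => tauto
    | pos =>
      have : f ∈ plusSupp (L v) ∪ plusSupp (L w) :=
        hcp (by simp [plusSupp, hf'])
      simp only [Finset.mem_union, plusSupp, Finset.mem_filter, Finset.mem_univ, true_and] at this
      rcases this with h | h
      · left; simp [hf', h]
      · right; left; simp [hf', h]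
    | neg =>
      have : f ∈ minusSupp (L v) ∪ minusSupp (L w) :=
        hcm (by simp [minusSupp, hf'])
      simp only [Finset.mem_union, minusSupp, Finset.mem_filter, Finset.mem_univ, true_and] at this
      rcases this with h | h
      · left; simp [hf', h]
      · right; left; simp [hf', h]
end
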